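/- Two n×n matrices A and B over a field are principal minor equivalent if and only if for every subset S ⊆ [n], the sum of the weights of directed Hamiltonian cycles on vertex set S is the same in the weighted digraphs of A and B; here the weight of a directed cycle C is ∏_{(i,j)∈C} A[i,j], and cycles must have length ≥ 2 or be loops weighted by diagonal entries, with the convention that diagonal entries also must agree (length-1 cycles i→i have weight A[i,i]). -/

import Mathlib

open Matrix

/-- Principal minor equivalence: all corresponding principal minors agree. -/
def PrincipalMinorEquiv {F : Type*} [Field F] {m : Type*} [Fintype m] [DecidableEq m]
    (A B : Matrix m m F) : Prop :=
  ∀ S : Finset m,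
    (A.submatrix (fun i : S => (i : m)) (fun i : S => (i : m))).det =
    (B.submatrix (fun i : S => (i : m)) (fun i : S => (i : m))).det

open Classical in
/-- The sum of the weights of directed Hamiltonian cycles on the vertex set `S`
in the weighted digraph of `A`: a Hamiltonian cycle on `S` (for `|S| ≥ 2`) is a
cyclic permutation of `S` with no fixed points, and for `|S| ≤ 1` the only
"cycle" is the loop, weighted by the diagonal entry. -/
noncomputable def hamCycleSum {n : ℕ} {F : Type*} [Field F]
    (A : Matrix (Fin n) (Fin n) F) (S : Finset (Fin n)) : F :=
  ∑ σ ∈ Finset.univ.filter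
      (fun σ : Equiv.Perm S => (σ.IsCycle ∧ σ.support = Finset.univ) ∨ S.card ≤ 1),
    ∏ i : S, A i (σ i)

/-!
Expanding the principal minor `det A[S]` over permutations supported in `S` and splitting off
the cycle through a fixed vertex `x ∈ S` gives
  `det A[S] = ∑_{x ∈ T ⊆ S} (-1)^(|T|-1) · (Hamiltonian cycle sum of A on T) · det A[S \ T]`.
The term `T = S` is the cycle sum of `S` itself with the unit coefficient `±1`, while all other
terms only involve proper subsets of `S`, so by strong induction on `S` the principal minors and
the Hamiltonian cycle sums determine each other.
-/

open Finset

namespace Equiv.Perm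

variable {m : Type*} [Fintype m] [DecidableEq m]

theorem sum_ofSubtype {M : Type*} [AddCommMonoid M] (S : Finset m) (g : Perm m → M) :
    ∑ σ : Perm S, g (ofSubtype σ) = ∑ c ∈ univ.filter (·.support ⊆ S), g c := by
  refine (sum_map univ ⟨ofSubtype, ofSubtype_injective⟩ g).symm.trans
    (congrArg (Finset.sum · g) ?_)
  ext c
  simpa [Set.subset_def, Finset.subset_iff] using
    (mem_range_ofSubtype_iff (p := (· ∈ S)) (g := c) : c ∈ MonoidHom.range _ ↔ _)

open Classical in
noncomputable def hamCycles (T : Finset m) : Finset (Perm m) :=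
  univ.filter fun c => (c.IsCycle ∧ c.support = T) ∨ (c = 1 ∧ #T ≤ 1)

variable {T : Finset m} {c σ τ : Perm m} {x : m}

theorem mem_hamCycles : c ∈ hamCycles T ↔ (c.IsCycle ∧ c.support = T) ∨ (c = 1 ∧ #T ≤ 1) := by
  simp [hamCycles]

theorem support_subset_of_mem_hamCycles (hc : c ∈ hamCycles T) : c.support ⊆ T := by
  rcases mem_hamCycles.1 hc with ⟨-, rfl⟩ | ⟨rfl, -⟩
  · exact subset_rfl
  · simp

theorem insert_support_of_mem_hamCycles (hc : c ∈ hamCycles T) (hx : x ∈ T) :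
    insert x c.support = T := by
  rcases mem_hamCycles.1 hc with ⟨-, rfl⟩ | ⟨rfl, hT⟩
  · exact Finset.insert_eq_of_mem hx
  · rw [support_one, insert_empty]
    exact (eq_singleton_iff_unique_mem.2 ⟨hx, fun y hy => card_le_one.1 hT y hy x hx⟩).symm

theorem sign_of_mem_hamCycles (hc : c ∈ hamCycles T) (hT : T.Nonempty) :
    sign c = (-1) ^ (#T - 1) := by
  obtain ⟨k, hk⟩ : ∃ k, #T = k + 1 := Nat.exists_eq_add_one.2 hT.card_pos
  rcases mem_hamCycles.1 hc with ⟨hcyc, rfl⟩ | ⟨rfl, hT1⟩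
  · rw [hcyc.sign, hk, pow_succ, Nat.add_sub_cancel, mul_neg_one, neg_neg]
  · rw [sign_one, show #T - 1 = 0 by omega, pow_zero]

theorem cycleOf_mem_hamCycles (σ : Perm m) (x : m) :
    σ.cycleOf x ∈ hamCycles (insert x (σ.cycleOf x).support) := by
  refine mem_hamCycles.2 ?_
  by_cases hx : σ x = x
  · right
    rw [(cycleOf_eq_one_iff σ).2 hx]
    simp
  · left
    have hxc : x ∈ (σ.cycleOf x).support := (mem_support_cycleOf_iff' hx).2 (SameCycle.refl _ _)
    exact ⟨isCycle_cycleOf σ hx, (Finset.insert_eq_of_mem hxc).symm⟩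

theorem cycleOf_inv_mul_apply (σ : Perm m) (x y : m) :
    ((σ.cycleOf x)⁻¹ * σ) y = if σ.SameCycle x y then y else σ y := by
  rw [mul_apply, inv_eq_iff_eq]
  split_ifs with h
  · exact (h.cycleOf_apply).symm
  · exact (cycleOf_apply_of_not_sameCycle (mt sameCycle_apply_right.1 h)).symm

theorem support_cycleOf_inv_mul_subset {S : Finset m} (hσ : σ.support ⊆ S) :
    ((σ.cycleOf x)⁻¹ * σ).support ⊆ S \ insert x (σ.cycleOf x).support := by
  intro y hy
  rw [mem_support, cycleOf_inv_mul_apply] at hy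
  split_ifs at hy with hxy
  · exact absurd rfl hy
  · have hxy' : x ≠ y := fun h => hxy (h ▸ SameCycle.refl _ _)
    simp [hσ (mem_support.2 hy), cycleOf_apply_of_not_sameCycle hxy, hxy'.symm]

theorem cycleOf_mul_of_mem_hamCycles (hc : c ∈ hamCycles T) (hx : x ∈ T)
    (hτ : _root_.Disjoint T τ.support) : (c * τ).cycleOf x = c := by
  have hτx : τ x = x := notMem_support.1 (disjoint_left.1 hτ hx)
  rcases mem_hamCycles.1 hc with ⟨hcyc, rfl⟩ | ⟨rfl, -⟩
  · have hdisj : c.Disjoint τ := disjoint_iff_disjoint_support.2 hτ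
    rw [cycleOf_mul_of_apply_right_eq_self hdisj.commute x hτx,
      hcyc.cycleOf_eq (mem_support.1 hx)]
  · rw [one_mul, (cycleOf_eq_one_iff τ).2 hτx]

theorem ofSubtype_mem_hamCycles_iff {S : Finset m} (σ : Perm S) :
    ofSubtype σ ∈ hamCycles S ↔ (σ.IsCycle ∧ σ.support = univ) ∨ #S ≤ 1 := by
  have hS : S = (univ : Finset S).map (Function.Embedding.subtype (· ∈ S)) := by
    rw [univ_eq_attach, attach_map_val]
  rw [mem_hamCycles, ← card_cycleType_eq_one, cycleType_ofSubtype, card_cycleType_eq_one,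
    support_ofSubtype, map_eq_one_iff _ ofSubtype_injective, Eq.congr_right hS, map_inj]
  refine or_congr (by convert Iff.rfl) ⟨And.right, fun hS1 => ⟨?_, hS1⟩⟩
  have : Subsingleton S := Fintype.card_le_one_iff_subsingleton.1 (by simpa using hS1)
  exact Subsingleton.elim σ 1

end Equiv.Perm

namespace Matrix

open Equiv Equiv.Perm

variable {m R : Type*} [DecidableEq m] [CommRing R]

theorem prod_ofSubtype (A : Matrix m m R) (S : Finset m) (σ : Perm S) :
    ∏ i ∈ S, A i (ofSubtype σ i) = ∏ i : S, A i (σ i) := by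
  rw [← prod_coe_sort S]
  exact Fintype.prod_congr _ _ fun i => by rw [ofSubtype_apply_coe]

def principalMinor (A : Matrix m m R) (S : Finset m) : R :=
  (A.submatrix ((↑) : S → m) (↑)).det

theorem principalMinor_empty (A : Matrix m m R) : principalMinor A ∅ = 1 :=
  det_isEmpty

variable [Fintype m]

theorem principalMinor_eq_sum (A : Matrix m m R) (S : Finset m) :
    principalMinor A S =
      ∑ σ ∈ univ.filter (·.support ⊆ S), (sign σ : R) * ∏ i ∈ S, A i (σ i) := by
  rw [principalMinor, ← det_transpose, det_apply', ← sum_ofSubtype]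
  refine Fintype.sum_congr _ _ fun σ => ?_
  rw [sign_ofSubtype, prod_ofSubtype]
  rfl

noncomputable def cycleSum (A : Matrix m m R) (T : Finset m) : R :=
  ∑ c ∈ hamCycles T, ∏ i ∈ T, A i (c i)

theorem hamCycleSum_eq_cycleSum {n : ℕ} {F : Type*} [Field F] (A : Matrix (Fin n) (Fin n) F)
    (S : Finset (Fin n)) : hamCycleSum A S = cycleSum A S := by
  have hsub : hamCycles S ⊆ univ.filter (·.support ⊆ S) := fun c hc =>
    mem_filter.2 ⟨mem_univ c, support_subset_of_mem_hamCycles hc⟩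
  rw [cycleSum, ← inter_eq_right.2 hsub, ← sum_ite_mem, ← sum_ofSubtype, hamCycleSum, sum_filter]
  refine Fintype.sum_congr _ _ fun σ => ?_
  rw [prod_ofSubtype]
  convert (if_congr (ofSubtype_mem_hamCycles_iff σ) rfl rfl).symm

theorem prod_mul_apply_of_disjoint (A : Matrix m m R) {S T : Finset m} {c τ : Perm m}
    (hTS : T ⊆ S) (hc : c.support ⊆ T) (hτ : Disjoint T τ.support) :
    ∏ i ∈ S, A i ((c * τ) i) = (∏ i ∈ T, A i (c i)) * ∏ i ∈ S \ T, A i (τ i) := by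
  have hτT : ∀ i ∈ T, τ i = i := fun i hi => notMem_support.1 (disjoint_left.1 hτ hi)
  have hcτ : ∀ i ∉ T, c (τ i) = τ i := fun i hi => by
    refine notMem_support.1 fun h => ?_
    have hτi : τ i ∈ T := hc h
    exact hi (τ.injective (hτT _ hτi) ▸ hτi)
  rw [← prod_sdiff hTS, mul_comm]
  congr 1
  · exact prod_congr rfl fun i hi => by rw [Perm.mul_apply, hτT i hi]
  · exact prod_congr rfl fun i hi => by rw [Perm.mul_apply, hcτ i (mem_sdiff.1 hi).2]

theorem cycleSum_mul_principalMinor_sdiff (A : Matrix m m R) {S T : Finset m} {x : m}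
    (hTS : T ⊆ S) (hxT : x ∈ T) :
    (-1) ^ (#T - 1) * cycleSum A T * principalMinor A (S \ T) =
      ∑ p ∈ hamCycles T ×ˢ univ.filter (·.support ⊆ S \ T),
        (sign (p.1 * p.2) : R) * ∏ i ∈ S, A i ((p.1 * p.2) i) := by
  rw [cycleSum, principalMinor_eq_sum, mul_sum (hamCycles T), sum_mul, sum_product]
  refine sum_congr rfl fun c hc => (mul_sum _ _ _).trans (sum_congr rfl fun τ hτ => ?_)
  have hτT : Disjoint T τ.support := disjoint_sdiff.mono_right (mem_filter.1 hτ).2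
  rw [prod_mul_apply_of_disjoint A hTS (support_subset_of_mem_hamCycles hc) hτT, map_mul,
    sign_of_mem_hamCycles hc ⟨x, hxT⟩]
  push_cast
  ring

theorem principalMinor_eq_sum_cycleSum_mul (A : Matrix m m R) {S : Finset m} {x : m}
    (hx : x ∈ S) :
    principalMinor A S = ∑ T ∈ S.powerset.filter (x ∈ ·),
      (-1) ^ (#T - 1) * cycleSum A T * principalMinor A (S \ T) := by
  rw [sum_congr rfl fun T hT => cycleSum_mul_principalMinor_sdiff A
    (mem_powerset.1 (mem_filter.1 hT).1) (mem_filter.1 hT).2, sum_sigma', principalMinor_eq_sum]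
  -- `σ` corresponds to (the vertex set of its cycle through `x`, that cycle, its other cycles)
  refine (sum_bij' (fun p _ => p.2.1 * p.2.2)
    (fun σ _ => ⟨insert x (σ.cycleOf x).support, σ.cycleOf x, (σ.cycleOf x)⁻¹ * σ⟩)
    ?_ ?_ ?_ ?_ fun _ _ => rfl).symm
  · rintro ⟨T, c, τ⟩ hp
    simp only [mem_sigma, mem_filter, mem_powerset, mem_product, mem_univ, true_and] at hp ⊢
    obtain ⟨⟨hTS, -⟩, hc, hτ⟩ := hp
    refine (support_mul_le c τ).trans (union_subset ?_ (hτ.trans sdiff_subset))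
    exact (support_subset_of_mem_hamCycles hc).trans hTS
  · intro σ hσ
    simp only [mem_sigma, mem_filter, mem_powerset, mem_product, mem_univ, true_and] at hσ ⊢
    exact ⟨⟨insert_subset hx ((support_cycleOf_le σ x).trans hσ), mem_insert_self x _⟩,
      cycleOf_mem_hamCycles σ x, support_cycleOf_inv_mul_subset hσ⟩
  · rintro ⟨T, c, τ⟩ hp
    simp only [mem_sigma, mem_filter, mem_powerset, mem_product, mem_univ, true_and] at hp
    obtain ⟨⟨-, hxT⟩, hc, hτ⟩ := hp
    rw [cycleOf_mul_of_mem_hamCycles hc hxT (disjoint_sdiff.mono_right hτ),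
      insert_support_of_mem_hamCycles hc hxT, inv_mul_cancel_left]
  · intro σ _
    exact mul_inv_cancel_left _ _

theorem cycleSum_empty (A : Matrix m m R) : cycleSum A ∅ = 1 := by
  have h : hamCycles (∅ : Finset m) = {1} := by
    ext c
    simp [mem_hamCycles, support_eq_empty_iff]
  simp [cycleSum, h]

variable {A B : Matrix m m R}

theorem cycleSum_eq_of_principalMinor_eq (h : ∀ S, principalMinor A S = principalMinor B S)
    (S : Finset m) : cycleSum A S = cycleSum B S := by
  induction S using Finset.strongInduction with
  | H S ih =>
  obtain rfl | ⟨x, hx⟩ := S.eq_empty_or_nonempty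
  · rw [cycleSum_empty, cycleSum_empty]
  have hS : S ∈ S.powerset.filter (x ∈ ·) := mem_filter.2 ⟨mem_powerset_self S, hx⟩
  have hproper : ∀ T ∈ (S.powerset.filter (x ∈ ·)).erase S,
      (-1) ^ (#T - 1) * cycleSum A T * principalMinor A (S \ T) =
        (-1) ^ (#T - 1) * cycleSum B T * principalMinor B (S \ T) := fun T hT => by
    have hTS := mem_powerset.1 (mem_filter.1 (mem_of_mem_erase hT)).1
    rw [ih T (ssubset_of_subset_of_ne hTS (ne_of_mem_erase hT)), h]
  have hSS := h S
  rw [principalMinor_eq_sum_cycleSum_mul A hx, principalMinor_eq_sum_cycleSum_mul B hx,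
    ← add_sum_erase _ _ hS, ← add_sum_erase _ _ hS, sum_congr rfl hproper, add_left_inj,
    sdiff_self, bot_eq_empty, principalMinor_empty, principalMinor_empty, mul_one, mul_one] at hSS
  exact (isUnit_neg_one.pow _).mul_left_cancel hSS

theorem principalMinor_eq_of_cycleSum_eq (h : ∀ T, cycleSum A T = cycleSum B T)
    (S : Finset m) : principalMinor A S = principalMinor B S := by
  induction S using Finset.strongInduction with
  | H S ih =>
  obtain rfl | ⟨x, hx⟩ := S.eq_empty_or_nonempty
  · rw [principalMinor_empty, principalMinor_empty]
  rw [principalMinor_eq_sum_cycleSum_mul A hx, principalMinor_eq_sum_cycleSum_mul B hx]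
  refine sum_congr rfl fun T hT => ?_
  obtain ⟨hTS, hxT⟩ := mem_filter.1 hT
  rw [h, ih _ (sdiff_ssubset (mem_powerset.1 hTS) ⟨x, hxT⟩)]

theorem principalMinor_eq_iff_cycleSum_eq :
    (∀ S, principalMinor A S = principalMinor B S) ↔ ∀ S, cycleSum A S = cycleSum B S :=
  ⟨cycleSum_eq_of_principalMinor_eq, principalMinor_eq_of_cycleSum_eq⟩

end Matrix

theorem pme_iff_hamCycleSum_eq {n : ℕ} {F : Type*} [Field F]
    (A B : Matrix (Fin n) (Fin n) F) :
    PrincipalMinorEquiv A B ↔ ∀ S : Finset (Fin n), hamCycleSum A S = hamCycleSum B S := by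
  simp only [Matrix.hamCycleSum_eq_cycleSum]
  exact Matrix.principalMinor_eq_iff_cycleSum_eq
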